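/- Let Λ be a graph, Λ_K a subgraph of Λ, and Λ' any subgraph of Λ. If Λ is a strong forest relative to Λ_K, then Λ' is a strong forest relative to Λ' ∩ Λ_K. (This is the graph-theoretic heart of the fact that the strong relative coloring test is inherited under combinatorial immersions.) -/

import Mathlib

/-- A combinatorial graph (Serre style): edges come with a fixed-point-free
reversal involution; loops and multiple edges are allowed. -/
structure SGraph where
  V : Type
  E : Type
  init : E → V
  bar : E → E
  bar_bar : ∀ e, bar (bar e) = e
  bar_ne : ∀ e, bar e ≠ e

namespace SGraph

variable (G : SGraph)

/-- Terminal vertex of an edge. -/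
def term (e : G.E) : G.V := G.init (G.bar e)

/-- Consecutive edges of the list match up. -/
def IsChain (l : List G.E) : Prop :=
  List.Chain' (fun e f => G.term e = G.init f) l

/-- A cycle: a nonempty closed edge path. -/
def IsCycle (l : List G.E) : Prop :=
  l ≠ [] ∧ G.IsChain l ∧
    ∀ e f, l.head? = some e → l.getLast? = some f → G.term f = G.init e

/-- A reduced cycle: no edge is followed (cyclically) by its reverse. -/
def IsReducedCycle (l : List G.E) : Prop :=
  G.IsCycle l ∧ List.Chain' (fun e f => f ≠ G.bar e) l ∧
    ∀ e f, l.head? = some e → l.getLast? = some f → e ≠ G.bar f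

/-- A graph is a forest if it contains no reduced cycle. -/
def IsForestGraph : Prop := ∀ l, ¬ G.IsReducedCycle l

/-- A subgraph: a set of vertices and a set of edges, closed under reversal,
with endpoints among the chosen vertices. -/
structure Subgraph (G : SGraph) where
  verts : Set G.V
  edges : Set G.E
  bar_mem : ∀ ⦃e⦄, e ∈ edges → G.bar e ∈ edges
  init_mem : ∀ ⦃e⦄, e ∈ edges → G.init e ∈ verts

variable {G}

namespace Subgraph

/-- Subgraph containment. -/
def le (H K : Subgraph G) : Prop := H.verts ⊆ K.verts ∧ H.edges ⊆ K.edges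

/-- Intersection of two subgraphs. -/
def inter (H K : Subgraph G) : Subgraph G where
  verts := H.verts ∩ K.verts
  edges := H.edges ∩ K.edges
  bar_mem := fun _ he => ⟨H.bar_mem he.1, K.bar_mem he.2⟩
  init_mem := fun _ he => ⟨H.init_mem he.1, K.init_mem he.2⟩

/-- All edges of the list lie in the subgraph. -/
def EdgesIn (H : Subgraph G) (l : List G.E) : Prop := ∀ e ∈ l, e ∈ H.edges

/-- A reduced cycle contained in the subgraph. -/
def IsReducedCycleIn (H : Subgraph G) (l : List G.E) : Prop :=
  G.IsReducedCycle l ∧ H.EdgesIn l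

/-- A subgraph is a forest if it contains no reduced cycle. -/
def IsForest (H : Subgraph G) : Prop := ∀ l, ¬ H.IsReducedCycleIn l

/-- Reachability inside a subgraph by edge paths. -/
inductive Reaches (H : Subgraph G) : G.V → G.V → Prop
  | refl (v : G.V) (hv : v ∈ H.verts) : Reaches H v v
  | step (e : G.E) (he : e ∈ H.edges) {q : G.V} (h : Reaches H (G.term e) q) :
      Reaches H (G.init e) q

/-- A subgraph is connected if it is nonempty and any two of its vertices are
joined by an edge path in it. -/
def Connected (H : Subgraph G) : Prop :=
  H.verts.Nonempty ∧ ∀ p ∈ H.verts, ∀ q ∈ H.verts, H.Reaches p q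

/-- A tree is a connected forest. -/
def IsTree (H : Subgraph G) : Prop := H.IsForest ∧ H.Connected

/-- `C` is a connected component of `H`: its vertices form a reachability class
of `H` and its edges are the induced ones. -/
def IsCompOf (C H : Subgraph G) : Prop :=
  ∃ v ∈ H.verts, C.verts = {w | H.Reaches v w} ∧
    C.edges = {e | e ∈ H.edges ∧ G.init e ∈ C.verts}

/-- `H` is a forest relative to `H'`: every reduced cycle of `H` is contained
in `H'`. -/
def ForestRel (H H' : Subgraph G) : Prop :=
  ∀ l, H.IsReducedCycleIn l → H'.EdgesIn l

/-- `H` is a strong forest relative to `H'`: a relative forest such that each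
component of `H` meets `H'` in an empty or connected subgraph. -/
def StrongForestRel (H H' : Subgraph G) : Prop :=
  H.ForestRel H' ∧
    ∀ C : Subgraph G, C.IsCompOf H → (C.inter H').verts = ∅ ∨ (C.inter H').Connected

/-- Euler characteristic: number of vertices minus number of (geometric)
edges; each geometric edge corresponds to a pair `{e, ē}`. -/
noncomputable def eulerChar (H : Subgraph G) : ℤ :=
  (H.verts.ncard : ℤ) - ((H.edges.ncard / 2 : ℕ) : ℤ)

/-- A walk in `H` from `p` to `q`, given as its list of traversed edges. -/
def IsWalk (H : Subgraph G) (p q : G.V) (l : List G.E) : Prop :=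
  H.EdgesIn l ∧ G.IsChain l ∧
    (∀ e, l.head? = some e → G.init e = p) ∧
    (∀ e, l.getLast? = some e → G.term e = q) ∧
    (l = [] → p = q ∧ p ∈ H.verts)

/-- The weight-0 subgraph of a zero/one-weighted subgraph: all of its vertices
together with its edges of weight 0. -/
def zeroSub (H : Subgraph G) (ω : G.E → ℕ) (hbar : ∀ e, ω (G.bar e) = ω e) :
    Subgraph G where
  verts := H.verts
  edges := {e | e ∈ H.edges ∧ ω e = 0}
  bar_mem := fun e he => ⟨H.bar_mem he.1, by rw [hbar]; exact he.2⟩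
  init_mem := fun _ he => H.init_mem he.1

end Subgraph

/-- The full subgraph of a graph. -/
def full (G : SGraph) : Subgraph G where
  verts := Set.univ
  edges := Set.univ
  bar_mem := fun _ _ => Set.mem_univ _
  init_mem := fun _ _ => Set.mem_univ _

open Classical in
/-- The quotient graph `G/H'` obtained by identifying the subgraph `H'` to a
single vertex `∗` (represented by `none`): its vertices are the vertices of
`G` not in `H'` together with `∗`; its edges are the edges of `G` not in `H'`,
with endpoints in `H'` replaced by `∗`. -/
noncomputable def quot (G : SGraph) (H' : Subgraph G) : SGraph where
  V := Option {v : G.V // v ∉ H'.verts}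
  E := {e : G.E // e ∉ H'.edges}
  init e := if h : G.init e.1 ∈ H'.verts then none else some ⟨G.init e.1, h⟩
  bar e := ⟨G.bar e.1, fun hc => e.2 (by simpa [G.bar_bar] using H'.bar_mem hc)⟩
  bar_bar e := Subtype.ext (G.bar_bar e.1)
  bar_ne e := fun hc => G.bar_ne e.1 (congrArg Subtype.val hc)

end SGraph

/-!
Let `H` be a strong forest relative to `K`. A reduced walk `P` of `H` with both ends in `K` lies
in `K`: as `K` meets the component of `H` containing the ends in a connected subgraph, `P` closes
up with a reduced walk `Q` of `H ∩ K`. If `P Q` is a reduced cycle it lies in `K`. Otherwise an end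
edge of `P` cancels against `Q` and so lies in `K`, or (when `Q` is empty) `P = b M b̄` where the
closed walk `M` meets `K`; either way `P` splits at a vertex of `K` into shorter such walks.
Now for `L ≤ H`, two vertices of `K` in a component `C` of `L` are joined by a reduced walk of `L`,
which then lies in `C ∩ K`.
-/

namespace SGraph

variable {G : SGraph}

@[simp]
lemma term_bar (e : G.E) : G.term (G.bar e) = G.init e := by
  rw [term, G.bar_bar]

def IsWalkFromTo (G : SGraph) : List G.E → G.V → G.V → Prop
  | [], p, q => p = q
  | e :: l, p, q => G.init e = p ∧ IsWalkFromTo G l (G.term e) q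

def IsReduced (G : SGraph) (l : List G.E) : Prop :=
  l.IsChain fun e f => f ≠ G.bar e

@[simp]
lemma isWalkFromTo_nil {p q : G.V} : G.IsWalkFromTo [] p q ↔ p = q := Iff.rfl

@[simp]
lemma isWalkFromTo_cons {e : G.E} {l : List G.E} {p q : G.V} :
    G.IsWalkFromTo (e :: l) p q ↔ G.init e = p ∧ G.IsWalkFromTo l (G.term e) q := Iff.rfl

lemma isWalkFromTo_append {l₁ l₂ : List G.E} {p r : G.V} :
    G.IsWalkFromTo (l₁ ++ l₂) p r ↔ ∃ q, G.IsWalkFromTo l₁ p q ∧ G.IsWalkFromTo l₂ q r := by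
  induction l₁ generalizing p with
  | nil => simp
  | cons e l ih => simp only [List.cons_append, isWalkFromTo_cons, ih, and_assoc, exists_and_left]

lemma IsWalkFromTo.append {l₁ l₂ : List G.E} {p q r : G.V} (h₁ : G.IsWalkFromTo l₁ p q)
    (h₂ : G.IsWalkFromTo l₂ q r) : G.IsWalkFromTo (l₁ ++ l₂) p r :=
  isWalkFromTo_append.2 ⟨q, h₁, h₂⟩

lemma IsWalkFromTo.isChain {l : List G.E} {p q : G.V} (h : G.IsWalkFromTo l p q) :
    G.IsChain l := by
  induction l generalizing p with
  | nil => exact List.isChain_nil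
  | cons e l ih =>
    refine List.isChain_cons.2 ⟨?_, ih h.2⟩
    rintro f hf
    cases l with
    | nil => simp at hf
    | cons f' l => cases hf; exact h.2.1.symm

lemma IsWalkFromTo.init_of_head? {l : List G.E} {p q : G.V} (h : G.IsWalkFromTo l p q)
    {e : G.E} (he : l.head? = some e) : G.init e = p := by
  cases l with
  | nil => simp at he
  | cons f l => cases he; exact h.1

lemma IsWalkFromTo.term_of_getLast? {l : List G.E} {p q : G.V} (h : G.IsWalkFromTo l p q)
    {e : G.E} (he : l.getLast? = some e) : G.term e = q := by
  rw [← List.dropLast_append_getLast? e he] at h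
  obtain ⟨r, -, hr⟩ := isWalkFromTo_append.1 h
  exact hr.2

lemma IsWalkFromTo.isReducedCycle {l : List G.E} {p : G.V} (hw : G.IsWalkFromTo l p p)
    (hne : l ≠ []) (hr : G.IsReduced l)
    (hwrap : ∀ e f, l.head? = some e → l.getLast? = some f → e ≠ G.bar f) :
    G.IsReducedCycle l :=
  ⟨⟨hne, hw.isChain, fun _ _ he hf => (hw.term_of_getLast? hf).trans (hw.init_of_head? he).symm⟩,
    hr, hwrap⟩

lemma IsWalkFromTo.exists_isReduced {l : List G.E} {p q : G.V} (hw : G.IsWalkFromTo l p q) :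
    ∃ l', G.IsWalkFromTo l' p q ∧ G.IsReduced l' ∧ l' ⊆ l := by
  induction l generalizing p with
  | nil => exact ⟨[], hw, List.isChain_nil, List.Subset.refl _⟩
  | cons a l ih =>
    obtain ⟨ha, hw⟩ := hw
    obtain ⟨l', hw', hr', hsub⟩ := ih hw
    cases l' with
    | nil => exact ⟨[a], by simpa [ha] using hw', List.isChain_singleton a, by simp⟩
    | cons c l' =>
      by_cases hc : c = G.bar a
      · subst hc
        refine ⟨l', ?_, hr'.tail, fun e he => List.mem_cons_of_mem _ (hsub (.tail _ he))⟩
        simpa [ha] using hw'.2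
      · exact ⟨a :: c :: l', ⟨ha, hw'⟩, List.isChain_cons_cons.2 ⟨hc, hr'⟩,
          List.cons_subset_cons _ hsub⟩

lemma IsWalkFromTo.exists_eq_cons_append_bar {l : List G.E} {p : G.V}
    (hw : G.IsWalkFromTo l p p) (hr : G.IsReduced l)
    (hwrap : ∃ e f, l.head? = some e ∧ l.getLast? = some f ∧ e = G.bar f) :
    ∃ a M, l = a :: (M ++ [G.bar a]) ∧ M ≠ [] ∧
      G.IsWalkFromTo M (G.term a) (G.term a) ∧ G.IsReduced M := by
  obtain ⟨a, f, ha, hf, rfl⟩ := hwrap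
  rcases l with _ | ⟨a', l⟩
  · simp at ha
  cases ha
  obtain ⟨M, rfl⟩ : ∃ M, l = M ++ [f] := by
    rcases List.eq_nil_or_concat' l with rfl | ⟨M, f', rfl⟩
    · exact absurd (by simpa using hf) (G.bar_ne f)
    · rw [← List.cons_append, List.getLast?_concat, Option.some_inj] at hf
      exact ⟨M, by rw [hf]⟩
  have hrM : G.IsReduced M := hr.tail.left_of_append
  refine ⟨G.bar f, M, by simp [G.bar_bar], ?_, ?_, hrM⟩
  · rintro rfl
    simp [IsReduced, G.bar_bar] at hr
  · obtain ⟨r, hwM, hwf⟩ := isWalkFromTo_append.1 hw.2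
    obtain rfl : G.init f = r := hwf.1
    simpa using hwM

namespace Subgraph

variable {H K L C : Subgraph G} {l l' : List G.E} {p q : G.V}

lemma edgesIn_cons {e : G.E} : H.EdgesIn (e :: l) ↔ e ∈ H.edges ∧ H.EdgesIn l := by
  simp [EdgesIn]

lemma edgesIn_append : H.EdgesIn (l ++ l') ↔ H.EdgesIn l ∧ H.EdgesIn l' := by
  simp [EdgesIn, or_imp, forall_and]

lemma edgesIn_inter : (H.inter K).EdgesIn l ↔ H.EdgesIn l ∧ K.EdgesIn l := by
  simp [EdgesIn, inter, forall_and]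

lemma EdgesIn.subset (h : H.EdgesIn l) (hl : l' ⊆ l) : H.EdgesIn l' :=
  fun e he => h e (hl he)

lemma EdgesIn.mono (h : H.EdgesIn l) (hle : H.le K) : K.EdgesIn l :=
  fun e he => hle.2 (h e he)

lemma inter_le_left : (H.inter K).le H :=
  ⟨Set.inter_subset_left, Set.inter_subset_left⟩

lemma le_full : H.le G.full :=
  ⟨Set.subset_univ _, Set.subset_univ _⟩

lemma term_mem {e : G.E} (he : e ∈ H.edges) : G.term e ∈ H.verts :=
  H.init_mem (H.bar_mem he)

namespace Reaches

lemma mem_left (h : H.Reaches p q) : p ∈ H.verts := by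
  cases h with
  | refl _ hv => exact hv
  | step e he _ => exact H.init_mem he

lemma mem_right (h : H.Reaches p q) : q ∈ H.verts := by
  induction h with
  | refl _ hv => exact hv
  | step _ _ _ ih => exact ih

lemma trans {r : G.V} (h₁ : H.Reaches p q) (h₂ : H.Reaches q r) : H.Reaches p r := by
  induction h₁ with
  | refl => exact h₂
  | step e he _ ih => exact .step e he (ih h₂)

lemma snoc {e : G.E} (h : H.Reaches p (G.init e)) (he : e ∈ H.edges) :
    H.Reaches p (G.term e) :=
  h.trans (.step e he (.refl _ (term_mem he)))

lemma symm (h : H.Reaches p q) : H.Reaches q p := by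
  induction h with
  | refl v hv => exact .refl v hv
  | step e he _ ih => simpa using ih.snoc (H.bar_mem he)

lemma mono (h : H.Reaches p q) (hle : H.le K) : K.Reaches p q := by
  induction h with
  | refl v hv => exact .refl v (hle.1 hv)
  | step e he _ ih => exact .step e (hle.2 he) ih

lemma exists_walk (h : H.Reaches p q) : ∃ l, G.IsWalkFromTo l p q ∧ H.EdgesIn l := by
  induction h with
  | refl => exact ⟨[], rfl, by simp [EdgesIn]⟩
  | step e he _ ih =>
    obtain ⟨l, hw, hl⟩ := ih
    exact ⟨e :: l, ⟨rfl, hw⟩, edgesIn_cons.2 ⟨he, hl⟩⟩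

lemma exists_isReduced_walk (h : H.Reaches p q) :
    ∃ l, G.IsWalkFromTo l p q ∧ G.IsReduced l ∧ H.EdgesIn l := by
  obtain ⟨l, hw, hl⟩ := h.exists_walk
  obtain ⟨l', hw', hr', hsub⟩ := hw.exists_isReduced
  exact ⟨l', hw', hr', hl.subset hsub⟩

end Reaches

lemma reaches_of_isWalkFromTo (hw : G.IsWalkFromTo l p q) (hl : H.EdgesIn l)
    (hp : p ∈ H.verts) : H.Reaches p q := by
  induction l generalizing p with
  | nil => exact hw ▸ .refl p hp
  | cons e l ih =>
    obtain ⟨rfl, hw⟩ := hw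
    rw [edgesIn_cons] at hl
    exact .step e hl.1 (ih hw hl.2 (term_mem hl.1))

def componentOf (H : Subgraph G) (v : G.V) : Subgraph G where
  verts := {w | H.Reaches v w}
  edges := {e | e ∈ H.edges ∧ H.Reaches v (G.init e)}
  bar_mem := fun _ he => ⟨H.bar_mem he.1, he.2.snoc he.1⟩
  init_mem := fun _ he => he.2

lemma isCompOf_componentOf {v : G.V} (hv : v ∈ H.verts) : (H.componentOf v).IsCompOf H :=
  ⟨v, hv, rfl, rfl⟩

lemma componentOf_le {v : G.V} : (H.componentOf v).le H :=
  ⟨fun _ hw => Reaches.mem_right hw, fun _ he => he.1⟩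

lemma IsCompOf.reaches (hC : C.IsCompOf H) (hp : p ∈ C.verts) (hq : q ∈ C.verts) :
    H.Reaches p q := by
  obtain ⟨v, -, hCv, -⟩ := hC
  rw [hCv] at hp hq
  exact Reaches.trans (Reaches.symm hp) hq

lemma IsCompOf.reaches_inter (hC : C.IsCompOf H) (hL : L.le H) (hpq : L.Reaches p q)
    (hp : p ∈ C.verts) : (C.inter L).Reaches p q := by
  obtain ⟨v, -, hCv, hCe⟩ := hC
  obtain ⟨-, hLH⟩ := hL
  induction hpq with
  | refl w hw => exact .refl w ⟨hp, hw⟩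
  | step e he _ ih =>
    have heC : e ∈ C.edges := by
      rw [hCe]
      exact ⟨hLH he, hp⟩
    refine .step e (Set.mem_inter heC he) (ih ?_)
    rw [hCv] at hp ⊢
    exact hp.snoc (hLH he)

/-- Peeling off cancelling end edges `a … ā` must stop at a reduced cycle of `H`, which lies in
`K`. -/
lemma ForestRel.exists_mem_of_isReduced (h : H.ForestRel K) (hw : G.IsWalkFromTo l p p)
    (hne : l ≠ []) (hr : G.IsReduced l) (hH : H.EdgesIn l) : ∃ e ∈ l, e ∈ K.edges := by
  induction hn : l.length using Nat.strong_induction_on generalizing l p with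
  | _ n ih =>
  by_cases hwrap : ∀ e f, l.head? = some e → l.getLast? = some f → e ≠ G.bar f
  · obtain ⟨e, he⟩ := List.exists_mem_of_ne_nil l hne
    exact ⟨e, he, h l ⟨hw.isReducedCycle hne hr hwrap, hH⟩ e he⟩
  push Not at hwrap
  obtain ⟨a, M, rfl, hMne, hwM, hrM⟩ := hw.exists_eq_cons_append_bar hr hwrap
  obtain ⟨e, he, heK⟩ := ih M.length (by simp [← hn]) hwM hMne hrM
    (hH.subset fun e he => by simp [he]) rfl
  exact ⟨e, by simp [he], heK⟩

/-- The cancelling pair `b … b̄` encloses a closed reduced walk, which meets `K`. -/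
lemma ForestRel.exists_split (h : H.ForestRel K) (hw : G.IsWalkFromTo l p p)
    (hr : G.IsReduced l) (hH : H.EdgesIn l)
    (hwrap : ∃ e f, l.head? = some e ∧ l.getLast? = some f ∧ e = G.bar f) :
    ∃ l₁ l₂ w, l = l₁ ++ l₂ ∧ l₁.length < l.length ∧ l₂.length < l.length ∧ w ∈ K.verts ∧
      G.IsWalkFromTo l₁ p w ∧ G.IsWalkFromTo l₂ w p := by
  obtain ⟨b, M, rfl, hMne, hwM, hrM⟩ := hw.exists_eq_cons_append_bar hr hwrap
  obtain ⟨g, hgM, hgK⟩ := h.exists_mem_of_isReduced hwM hMne hrM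
    (hH.subset fun e he => by simp [he])
  obtain ⟨M₁, M₂, rfl⟩ := List.append_of_mem hgM
  have hsplit : b :: (M₁ ++ g :: M₂ ++ [G.bar b]) = (b :: M₁) ++ (g :: (M₂ ++ [G.bar b])) := by
    simp
  rw [hsplit] at hw ⊢
  obtain ⟨w, hw₁, hw₂⟩ := isWalkFromTo_append.1 hw
  obtain rfl : G.init g = w := hw₂.1
  exact ⟨_, _, _, rfl, by simp, by simp, K.init_mem hgK, hw₁, hw₂⟩

lemma StrongForestRel.reaches_inter (h : H.StrongForestRel K) (hpq : H.Reaches p q)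
    (hp : p ∈ K.verts) (hq : q ∈ K.verts) : (H.inter K).Reaches p q := by
  have hpC : p ∈ ((H.componentOf p).inter K).verts := ⟨.refl p hpq.mem_left, hp⟩
  rcases h.2 _ (isCompOf_componentOf hpq.mem_left) with hempty | hconn
  · exact absurd (hempty ▸ hpC) (Set.notMem_empty p)
  · exact (hconn.2 p hpC q ⟨hpq, hq⟩).mono
      ⟨fun _ hw => ⟨componentOf_le.1 hw.1, hw.2⟩, fun _ he => ⟨componentOf_le.2 he.1, he.2⟩⟩

theorem StrongForestRel.edgesIn_of_isReduced (h : H.StrongForestRel K)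
    (hw : G.IsWalkFromTo l p q) (hr : G.IsReduced l) (hH : H.EdgesIn l)
    (hp : p ∈ K.verts) (hq : q ∈ K.verts) : K.EdgesIn l := by
  induction hn : l.length using Nat.strong_induction_on generalizing l p q with
  | _ n ih =>
  subst hn
  rcases l with _ | ⟨a, l⟩
  · simp [EdgesIn]
  have hpH : p ∈ H.verts := hw.1 ▸ H.init_mem (edgesIn_cons.1 hH).1
  obtain ⟨Q, hwQ, hrQ, hQ⟩ :=
    (h.reaches_inter (reaches_of_isWalkFromTo hw hH hpH) hp hq).symm.exists_isReduced_walk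
  rw [edgesIn_inter] at hQ
  rcases Q with _ | ⟨x, Q⟩
  · obtain rfl : q = p := hwQ
    by_cases hwrap : ∀ e f, (a :: l).head? = some e → (a :: l).getLast? = some f → e ≠ G.bar f
    · exact h.1 _ ⟨hw.isReducedCycle (List.cons_ne_nil a l) hr hwrap, hH⟩
    push Not at hwrap
    obtain ⟨l₁, l₂, w, hsplit, hl₁, hl₂, hwK, hw₁, hw₂⟩ := h.1.exists_split hw hr hH hwrap
    rw [hsplit] at hr hH ⊢
    rw [edgesIn_append] at hH ⊢
    exact ⟨ih _ hl₁ hw₁ hr.left_of_append hH.1 hp hwK rfl,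
      ih _ hl₂ hw₂ hr.right_of_append hH.2 hwK hp rfl⟩
  by_cases hlast : ∃ f ∈ (a :: l).getLast?, x = G.bar f
  · obtain ⟨f, hf, rfl⟩ := hlast
    have hfK : f ∈ K.edges := by simpa [G.bar_bar] using K.bar_mem (edgesIn_cons.1 hQ.2).1
    rw [← List.dropLast_append_getLast? f hf] at hw hr hH ih ⊢
    obtain ⟨w, hw₀, hwf⟩ := isWalkFromTo_append.1 hw
    obtain rfl : G.init f = w := hwf.1
    rw [edgesIn_append] at hH ⊢
    exact ⟨ih _ (by simp) hw₀ hr.left_of_append hH.1 hp (K.init_mem hfK) rfl,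
      edgesIn_cons.2 ⟨hfK, by simp [EdgesIn]⟩⟩
  by_cases hfirst : ∃ y ∈ (x :: Q).getLast?, a = G.bar y
  · obtain ⟨y, hy, rfl⟩ := hfirst
    have hyK : y ∈ K.edges := hQ.2 y (List.mem_of_getLast? hy)
    rw [edgesIn_cons] at hH ⊢
    exact ⟨K.bar_mem hyK, ih _ (by simp) hw.2 hr.tail hH.2 (by simpa using K.init_mem hyK) hq rfl⟩
  push Not at hlast hfirst
  have hcyc : G.IsReducedCycle (a :: l ++ x :: Q) := by
    refine (hw.append hwQ).isReducedCycle (by simp) (hr.append hrQ ?_) ?_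
    · simpa using hlast
    · rintro e f he hf
      rw [List.getLast?_append_cons] at hf
      cases he
      exact hfirst f hf
  exact (edgesIn_append.1 (h.1 _ ⟨hcyc, edgesIn_append.2 ⟨hH, hQ.1⟩⟩)).1

theorem StrongForestRel.inter_of_le (h : H.StrongForestRel K) (hL : L.le H) :
    L.StrongForestRel (L.inter K) := by
  refine ⟨fun l hl => edgesIn_inter.2 ⟨hl.2, h.1 l ⟨hl.1, hl.2.mono hL⟩⟩, fun C hC => ?_⟩
  refine (C.inter (L.inter K)).verts.eq_empty_or_nonempty.imp id fun hne => ⟨hne, ?_⟩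
  rintro p ⟨hpC, hpL, hpK⟩ q ⟨hqC, -, hqK⟩
  obtain ⟨P, hw, hr, hPL⟩ := (hC.reaches hpC hqC).exists_isReduced_walk
  have hPK : K.EdgesIn P := h.edgesIn_of_isReduced hw hr (hPL.mono hL) hpK hqK
  exact hC.reaches_inter inter_le_left
    (reaches_of_isWalkFromTo hw (edgesIn_inter.2 ⟨hPL, hPK⟩) ⟨hpL, hpK⟩) hpC

end Subgraph

end SGraph

theorem strong_forest_rel_inherited_general
    (G : SGraph)
    (ΛK Λ' : SGraph.Subgraph G)
    (h : (G.full).StrongForestRel ΛK) :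
    Λ'.StrongForestRel (Λ'.inter ΛK) :=
  h.inter_of_le SGraph.Subgraph.le_full

/-- If `Λ` (here: the full subgraph of `G`) is a strong forest
relative to a subgraph `Λ_K`, then any subgraph `Λ'` is a strong forest
relative to `Λ' ∩ Λ_K`. -/
theorem strong_forest_rel_inherited
    (G : SGraph) [Fintype G.V] [Fintype G.E]
    (ΛK Λ' : SGraph.Subgraph G)
    (h : (G.full).StrongForestRel ΛK) :
    Λ'.StrongForestRel (Λ'.inter ΛK) :=
  strong_forest_rel_inherited_general G ΛK Λ' h
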